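/- arXiv:math/0502092 — 5 statements merged into one kernel-verified Lean document; each statement's English description precedes it below -/
import Mathlib

section
/- Let R be a ring whose underlying additive group is torsion-free as a ℤ-module, and let p be a prime. If Ω ∈ R is idempotent modulo p^k for some k > 0 (i.e., Ω² - Ω ∈ p^k R), then Ω^p is idempotent modulo p^(k+1) (i.e., Ω^(2p) - Ω^p ∈ p^(k+1) R). -/
/-! Write `Ω ^ (2 * p) = (Ω + N) ^ p` with `N = Ω ^ 2 - Ω`, which commutes with `Ω` and is
divisible by `p ^ k`. In the binomial expansion every term but `Ω ^ p` is divisible by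
`p ^ (k + 1)`: the middle terms get an extra factor `p` from `p.choose m`, and `N ^ p` is
divisible by `p ^ (k * p)`. -/

theorem Nat.Prime.pow_succ_dvd_pow_mul_choose {p k m : ℕ} (hp : p.Prime) (hk : 0 < k)
    (hm : m < p) : p ^ (k + 1) ∣ p ^ (k * (p - m)) * p.choose m := by
  rcases Nat.eq_zero_or_pos m with rfl | hm₀
  · rw [Nat.choose_zero_right, mul_one, Nat.sub_zero]
    exact Nat.pow_dvd_pow p (by nlinarith [hp.two_le])
  · rw [pow_succ]
    exact mul_dvd_mul (Nat.pow_dvd_pow p (Nat.le_mul_of_pos_right k (by omega)))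
      (hp.dvd_choose_self hm₀.ne' hm)

section

variable {R : Type*} [Ring R] {p k : ℕ}

theorem pow_succ_dvd_pow_mul_choose_of_dvd {b : R} (hp : p.Prime) (hk : 0 < k)
    (hb : (p : R) ^ k ∣ b) {m : ℕ} (hm : m < p) :
    (p : R) ^ (k + 1) ∣ b ^ (p - m) * (p.choose m : R) := by
  obtain ⟨c, rfl⟩ := hb
  rw [((Nat.cast_commute p c).pow_left k).mul_pow, ← pow_mul, mul_assoc,
    ← (Nat.cast_commute _ _).eq, ← mul_assoc]
  refine dvd_mul_of_dvd_left ?_ _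
  exact_mod_cast Nat.cast_dvd_cast (hp.pow_succ_dvd_pow_mul_choose hk hm)

theorem Commute.pow_succ_dvd_add_pow_sub_pow {a b : R} (hab : Commute a b) (hp : p.Prime)
    (hk : 0 < k) (hb : (p : R) ^ k ∣ b) : (p : R) ^ (k + 1) ∣ (a + b) ^ p - a ^ p := by
  rw [hab.add_pow, Finset.sum_range_succ, Nat.sub_self, Nat.choose_self, pow_zero,
    Nat.cast_one, mul_one, mul_one, add_sub_cancel_right]
  refine Finset.dvd_sum fun m hm => ?_
  obtain ⟨d, hd⟩ := pow_succ_dvd_pow_mul_choose_of_dvd hp hk hb (Finset.mem_range.mp hm)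
  refine ⟨a ^ m * d, ?_⟩
  rw [mul_assoc, hd, ← mul_assoc, ← mul_assoc, ((Nat.cast_commute p (a ^ m)).pow_left _).eq]

end

theorem stmt2_general {R : Type*} [Ring R] (p k : ℕ) (hp : p.Prime)
    (hk : 0 < k) (Ω : R) (h : ∃ Λ : R, Ω ^ 2 - Ω = ((p : ℤ) ^ k) • Λ) :
    ∃ Λ' : R, Ω ^ (2 * p) - Ω ^ p = ((p : ℤ) ^ (k + 1)) • Λ' := by
  obtain ⟨Λ, hΛ⟩ := h
  have hdvd : (p : R) ^ k ∣ Ω ^ 2 - Ω := ⟨Λ, by rw [hΛ, zsmul_eq_mul]; push_cast; rfl⟩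
  have hcomm : Commute Ω (Ω ^ 2 - Ω) := (Commute.self_pow Ω 2).sub_right (Commute.refl Ω)
  obtain ⟨Λ', hΛ'⟩ := hcomm.pow_succ_dvd_add_pow_sub_pow hp hk hdvd
  refine ⟨Λ', ?_⟩
  rw [add_sub_cancel, ← pow_mul] at hΛ'
  rw [hΛ', zsmul_eq_mul]
  push_cast
  rfl

/-- If `R` is a ring, torsion-free as `ℤ`-module, `p` prime, and `Ω` is idempotent
modulo `p^k` for some `k > 0`, then `Ω^p` is idempotent modulo `p^(k+1)`. -/
theorem stmt2 {R : Type*} [Ring R] [NoZeroSMulDivisors ℤ R] (p k : ℕ) (hp : p.Prime)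
    (hk : 0 < k) (Ω : R) (h : ∃ Λ : R, Ω ^ 2 - Ω = ((p : ℤ) ^ k) • Λ) :
    ∃ Λ' : R, Ω ^ (2 * p) - Ω ^ p = ((p : ℤ) ^ (k + 1)) • Λ' :=
  stmt2_general p k hp hk Ω h
end

section
/- Let R be a ring, torsion-free as a ℤ-module, and p a prime. If Ω ∈ R is idempotent modulo p, then the sequence Ω, Ω^p, Ω^(p²), Ω^(p³), ... is a Cauchy sequence in the p-adic topology on R; in particular, for all l ≥ k > 0, Ω^(p^l) - Ω^(p^k) ∈ p^(k+1) R. -/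
/-!
Torsion-freeness forces `Ω` to commute with `Λ = (Ω² - Ω) / p`, so everything happens in the
commutative subring generated by `Ω` and `Λ`. There `p ∣ Ω ^ n - Ω` for every `n ≥ 1`; applied to
`a = Ω ^ p ^ (l - k)` and `b = Ω`, the lifting `p ∣ a - b → p ^ (k + 1) ∣ a ^ p ^ k - b ^ p ^ k`
gives `p ^ (k + 1) ∣ Ω ^ p ^ l - Ω ^ p ^ k`.
-/

open scoped IsMulCommutative

theorem Commute.of_zsmul_right {R : Type*} [Ring R] [NoZeroSMulDivisors ℤ R] {a b : R} {n : ℤ}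
    (hn : n ≠ 0) (h : Commute a (n • b)) : Commute a b := by
  refine smul_right_injective R hn ?_
  simpa only [smul_mul_assoc, mul_smul_comm] using h.eq

theorem dvd_pow_sub_self_of_dvd_sq_sub_self {S : Type*} [CommRing S] {c ω : S}
    (h : c ∣ ω ^ 2 - ω) {n : ℕ} (hn : 0 < n) : c ∣ ω ^ n - ω := by
  induction n, hn using Nat.le_induction with
  | base => simp
  | succ n _ ih =>
    have hsplit : ω ^ (n + 1) - ω = ω * (ω ^ n - ω) + (ω ^ 2 - ω) := by ring
    rw [hsplit]
    exact dvd_add (dvd_mul_of_dvd_right ih ω) h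

theorem pow_succ_dvd_pow_pow_sub_pow_pow_of_dvd_sq_sub_self {S : Type*} [CommRing S] {p : ℕ}
    (hp : p ≠ 0) {ω : S} (h : (p : S) ∣ ω ^ 2 - ω) {k l : ℕ} (hkl : k ≤ l) :
    (p : S) ^ (k + 1) ∣ ω ^ p ^ l - ω ^ p ^ k := by
  have hpow : (p : S) ∣ ω ^ p ^ (l - k) - ω :=
    dvd_pow_sub_self_of_dvd_sq_sub_self h (Nat.pos_of_ne_zero (pow_ne_zero _ hp))
  have hl : ω ^ p ^ l = (ω ^ p ^ (l - k)) ^ p ^ k := by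
    rw [← pow_mul, ← pow_add, Nat.sub_add_cancel hkl]
  rw [hl]
  exact_mod_cast dvd_sub_pow_of_dvd_sub hpow k

/-- If `R` is a ring, torsion-free as a `ℤ`-module, `p` prime, and `Ω` is idempotent
modulo `p`, then the sequence `Ω, Ω^p, Ω^(p²), ...` is Cauchy in the `p`-adic topology:
for all `l ≥ k > 0`, `Ω^(p^l) - Ω^(p^k) ∈ p^(k+1) R`. -/
theorem stmt3 {R : Type*} [Ring R] [NoZeroSMulDivisors ℤ R] (p : ℕ) (hp : p.Prime)
    (Ω : R) (h : ∃ Λ : R, Ω ^ 2 - Ω = (p : ℤ) • Λ) :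
    ∀ k l : ℕ, 0 < k → k ≤ l →
      ∃ Λ' : R, Ω ^ (p ^ l) - Ω ^ (p ^ k) = ((p : ℤ) ^ (k + 1)) • Λ' := by
  obtain ⟨Λ, hΛ⟩ := h
  have hcomm : Commute Ω Λ := by
    refine Commute.of_zsmul_right (Int.natCast_ne_zero.mpr hp.ne_zero) ?_
    rw [← hΛ]
    exact (Commute.self_pow Ω 2).sub_right (Commute.refl Ω)
  let S := Subring.closure ({Ω, Λ} : Set R)
  have : IsMulCommutative S := Subring.isMulCommutative_closure <| by
    rintro x (rfl | rfl) y (rfl | rfl) <;> simp [hcomm.eq]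
  let ω : S := ⟨Ω, Subring.subset_closure (by simp)⟩
  have hω : (p : S) ∣ ω ^ 2 - ω :=
    ⟨⟨Λ, Subring.subset_closure (by simp)⟩, Subtype.ext (by simp [ω, hΛ, zsmul_eq_mul])⟩
  intro k l _ hkl
  obtain ⟨c, hc⟩ := pow_succ_dvd_pow_pow_sub_pow_pow_of_dvd_sq_sub_self hp.ne_zero hω hkl
  exact ⟨c, by simpa [ω, zsmul_eq_mul] using congrArg Subtype.val hc⟩
end

section
/- Let R be a ring, torsion-free as a ℤ-module and p-adically complete, p prime, and let ε : R → ℤ_p be a ring homomorphism. If Ω ∈ R satisfies Ω² ≡ Ω mod p and ε(Ω) ≡ 1 mod p, and ω = lim_{k→∞} Ω^(p^k) is the associated idempotent, then ε(ω) = 1. -/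
lemma aux_pow_cong {A : Type*} [CommRing A] (p : ℕ) (b : A) (hb : (p : A) ∣ b - 1) :
    ∀ k : ℕ, (p : A) ^ (k + 1) ∣ b ^ (p ^ k) - 1 := by
  intro k
  induction k with
  | zero => simpa using hb
  | succ k ih =>
    have hc : (p : A) ∣ b ^ (p ^ k) - 1 :=
      dvd_trans (dvd_pow_self _ (Nat.succ_ne_zero k)) ih
    set c := b ^ (p ^ k) with hcdef
    have key : ∑ i ∈ Finset.range p, c ^ i
        = (∑ i ∈ Finset.range p, (c ^ i - 1)) + p := by
      rw [Finset.sum_sub_distrib]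
      simp
    have hsum : (p : A) ∣ ∑ i ∈ Finset.range p, c ^ i := by
      rw [key]
      refine dvd_add (Finset.dvd_sum fun i _ => ?_) dvd_rfl
      exact dvd_trans hc (by simpa using sub_dvd_pow_sub_pow c 1 i)
    have hgoal : b ^ (p ^ (k + 1)) - 1 = (∑ i ∈ Finset.range p, c ^ i) * (c - 1) := by
      rw [geom_sum_mul, ← pow_mul, ← pow_succ]
    rw [hgoal, pow_succ, mul_comm ((p : A) ^ (k + 1))]
    exact mul_dvd_mul hsum ih

/-- If `R` is a ring, torsion-free as a `ℤ`-module and `p`-adically complete, `ε : R → ℤ_p`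
a ring homomorphism, `Ω` idempotent mod `p` with `ε(Ω) ≡ 1 mod p`, and
`ω = lim_k Ω^(p^k)` the associated idempotent, then `ε(ω) = 1`. -/
theorem stmt5 {R : Type*} [Ring R] [NoZeroSMulDivisors ℤ R] (p : ℕ) [Fact p.Prime]
    [IsAdicComplete (Ideal.span {(p : ℤ)}) R]
    (Ω ω : R) (h : ∃ Λ : R, Ω ^ 2 - Ω = (p : ℤ) • Λ)
    (ε : R →+* ℤ_[p]) (hε : (p : ℤ_[p]) ∣ ε Ω - 1)
    (hω : ∀ n : ℕ, ∃ m : ℕ, ∀ k : ℕ, m ≤ k → ∃ c : R, Ω ^ (p ^ k) - ω = ((p : ℤ) ^ n) • c) :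
    ε ω = 1 := by
  have hdvd : ∀ n : ℕ, (p : ℤ_[p]) ^ n ∣ ε ω - 1 := by
    intro n
    obtain ⟨m, hm⟩ := hω n
    obtain ⟨c, hc⟩ := hm (max m n) (le_max_left _ _)
    have h1 : ε Ω ^ (p ^ max m n) - ε ω = (p : ℤ_[p]) ^ n * ε c := by
      have := congrArg ε hc
      rw [map_sub, map_pow, map_zsmul] at this
      rw [this, zsmul_eq_mul]
      push_cast
      ring
    have h2 : (p : ℤ_[p]) ^ n ∣ ε Ω ^ (p ^ max m n) - 1 := by
      refine dvd_trans (pow_dvd_pow _ ?_) (aux_pow_cong p (ε Ω) hε (max m n))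
      omega
    have : ε ω - 1 = (ε Ω ^ (p ^ max m n) - 1) - (ε Ω ^ (p ^ max m n) - ε ω) := by ring
    rw [this, h1]
    exact dvd_sub h2 (Dvd.intro _ rfl)
  by_contra hne
  have hx : ε ω - 1 ≠ 0 := sub_ne_zero.mpr hne
  obtain ⟨N, hN⟩ : ∃ N : ℕ, ((ε ω - 1).valuation : ℤ) < N :=
    ⟨(ε ω - 1).valuation + 1, by omega⟩
  have := (PadicInt.mem_span_pow_iff_le_valuation _ hx N).mp
    (Ideal.mem_span_singleton.mpr (hdvd N))
  omega
end

section
/- Let G be a finite group. Two finite (left) G-sets Ω and Λ are isomorphic if and only if |Ω^H| = |Λ^H| for every subgroup H ≤ G, where Ω^H denotes the set of H-fixed points. Equivalently, the map A(G) → ∏_{[H]} ℤ sending Ω to the tuple of fixed-point counts |Ω^H|, indexed over conjugacy classes of subgroups, is an injective ℤ-module homomorphism on the Burnside ring A(G). -/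
open MulAction

universe u v w

private lemma fix_mem_iff {G : Type w} [Group G] {α : Type u} [MulAction G α]
    (a : α) (g g' : G) : g'⁻¹ * g ∈ stabilizer G a ↔ g • a = g' • a := by
  rw [mem_stabilizer_iff, mul_smul, inv_smul_eq_iff]

private lemma stab_eq_of_max {G : Type w} [Group G] [Finite G] {α : Type u} [MulAction G α]
    {H : Subgroup G} (a : α) (ha : ∀ h ∈ H, h • a = a)
    (hle : Nat.card (stabilizer G a) ≤ Nat.card H) : stabilizer G a = H :=
  (Subgroup.eq_of_le_of_card_ge (fun h hh => mem_stabilizer_iff.mpr (ha h hh)) hle).symm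

private lemma card_fix_split {Ω : Type u} [Finite Ω] (p q : Ω → Prop) :
    Nat.card {z : Ω // p z} =
      Nat.card {z : {w : Ω // q w} // p z.1} + Nat.card {z : {w : Ω // ¬ q w} // p z.1} := by
  classical
  rw [← Nat.card_sum]
  apply Nat.card_congr
  refine (Equiv.sumCompl (fun z : {w : Ω // p w} => q z.1)).symm.trans (Equiv.sumCongr ?_ ?_)
  · exact ((Equiv.subtypeSubtypeEquivSubtypeInter p q).trans
      ((Equiv.subtypeEquivRight fun z => and_comm).trans
        (Equiv.subtypeSubtypeEquivSubtypeInter q p).symm))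
  · exact ((Equiv.subtypeSubtypeEquivSubtypeInter p (fun w => ¬ q w)).trans
      ((Equiv.subtypeEquivRight fun z => and_comm).trans
        (Equiv.subtypeSubtypeEquivSubtypeInter (fun w => ¬ q w) p).symm))

private lemma botfix {G : Type w} [Group G] {α : Type u} [MulAction G α] (a : α) :
    ∀ h ∈ (⊥ : Subgroup G), h • a = a := by
  intro h hh
  rw [Subgroup.mem_bot] at hh
  subst hh
  exact one_smul _ _

private lemma burnside_marks_aux (G : Type w) [Group G] [Finite G] :
    ∀ (n : ℕ) (Ω : Type u) (Λ : Type v) [Finite Ω] [Finite Λ]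
      [MulAction G Ω] [MulAction G Λ],
      Nat.card Ω = n →
      (∀ H : Subgroup G,
        Nat.card {x : Ω // ∀ h ∈ H, h • x = x} = Nat.card {x : Λ // ∀ h ∈ H, h • x = x}) →
      ∃ e : Ω ≃ Λ, ∀ (g : G) (x : Ω), e (g • x) = g • e x := by
  intro n
  induction n using Nat.strong_induction_on with
  | _ n ih =>
  intro Ω Λ _ _ _ _ hn hfix
  classical
  have hcard : Nat.card Ω = Nat.card Λ := by
    have h1 : Nat.card {a : Ω // ∀ h ∈ (⊥ : Subgroup G), h • a = a} = Nat.card Ω :=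
      Nat.card_congr (Equiv.subtypeUnivEquiv fun a => botfix a)
    have h2 : Nat.card {a : Λ // ∀ h ∈ (⊥ : Subgroup G), h • a = a} = Nat.card Λ :=
      Nat.card_congr (Equiv.subtypeUnivEquiv fun a => botfix a)
    rw [← h1, ← h2, hfix]
  rcases isEmpty_or_nonempty Ω with hΩe | hΩne
  · have hΛ0 : Nat.card Λ = 0 := by rw [← hcard, Nat.card_of_isEmpty]
    have : IsEmpty Λ := (Nat.card_eq_zero.mp hΛ0).resolve_right fun h => h.not_finite ‹_›
    exact ⟨Equiv.equivOfIsEmpty Ω Λ, fun g a => (IsEmpty.false a).elim⟩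
  -- choose H of maximal order among subgroups with a fixed point in Ω
  set f : Subgroup G → ℕ := fun K => if ∃ a : Ω, ∀ h ∈ K, h • a = a then Nat.card K else 0 with hf
  obtain ⟨H, hHmax⟩ := Finite.exists_max f
  have hbot : f ⊥ = 1 := by
    have : f ⊥ = if ∃ a : Ω, ∀ h ∈ (⊥ : Subgroup G), h • a = a then Nat.card (⊥ : Subgroup G)
        else 0 := rfl
    rw [this, if_pos ⟨hΩne.some, botfix _⟩, Subgroup.card_bot]
  have hΩH : ∃ a : Ω, ∀ h ∈ H, h • a = a := by
    by_contra hc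
    have h0 : f H = 0 := if_neg hc
    have := hHmax ⊥
    omega
  have hfH : f H = Nat.card H := if_pos hΩH
  have hmax : ∀ K : Subgroup G, (∃ a : Ω, ∀ h ∈ K, h • a = a) → Nat.card K ≤ Nat.card H := by
    intro K hK
    have h1 := hHmax K
    rw [hfH] at h1
    have h2 : f K = Nat.card K := if_pos hK
    rwa [h2] at h1
  obtain ⟨x, hx⟩ := hΩH
  have hsx : stabilizer G x = H :=
    stab_eq_of_max x hx (hmax _ ⟨x, fun h hh => mem_stabilizer_iff.mp hh⟩)
  -- a corresponding point y in Λ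
  haveI : Nonempty {a : Ω // ∀ h ∈ H, h • a = a} := ⟨⟨x, hx⟩⟩
  have hposΛ : 0 < Nat.card {a : Λ // ∀ h ∈ H, h • a = a} := by
    rw [← hfix]
    exact Nat.card_pos
  obtain ⟨⟨y, hy⟩⟩ := (Nat.card_pos_iff.mp hposΛ).1
  have hsy : stabilizer G y = H := by
    refine stab_eq_of_max y hy (hmax _ ?_)
    haveI : Nonempty {a : Λ // ∀ h ∈ stabilizer G y, h • a = a} :=
      ⟨⟨y, fun h hh => mem_stabilizer_iff.mp hh⟩⟩
    have hpos : 0 < Nat.card {a : Ω // ∀ h ∈ stabilizer G y, h • a = a} := by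
      rw [hfix]
      exact Nat.card_pos
    obtain ⟨⟨b, hb⟩⟩ := (Nat.card_pos_iff.mp hpos).1
    exact ⟨b, hb⟩
  -- key transfer lemma between the two orbits
  have wd : ∀ g g' : G, g • x = g' • x ↔ g • y = g' • y := fun g g' => by
    rw [← fix_mem_iff, ← fix_mem_iff, hsx, hsy]
  -- the equivariant bijection between the orbits
  have hux : ∀ z : orbit G x, ∃ g : G, g • x = (z : Ω) := fun z => mem_orbit_iff.mp z.2
  choose u hu using hux
  have hvy : ∀ w : orbit G y, ∃ g : G, g • y = (w : Λ) := fun w => mem_orbit_iff.mp w.2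
  choose v hv using hvy
  let φ : orbit G x ≃ orbit G y :=
    { toFun := fun z => ⟨u z • y, mem_orbit _ _⟩
      invFun := fun w => ⟨v w • x, mem_orbit _ _⟩
      left_inv := fun z => Subtype.ext
        (((wd _ _).mpr (hv ⟨u z • y, mem_orbit _ _⟩)).trans (hu z))
      right_inv := fun w => Subtype.ext
        (((wd _ _).mp (hu ⟨v w • x, mem_orbit _ _⟩)).trans (hv w)) }
  have hφ : ∀ (g : G) (z : orbit G x), (φ (g • z) : Λ) = g • (φ z : Λ) := by
    intro g z
    have h1 : u (g • z) • x = (g * u z) • x := by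
      rw [hu (g • z), mul_smul, hu z]
      rfl
    show u (g • z) • y = g • (u z • y)
    rw [(wd _ _).mp h1, mul_smul]
  -- complement types
  have hCmem : ∀ (g : G) {z : Ω}, z ∈ orbit G x → g • z ∈ orbit G x :=
    fun g _ hz => mapsTo_smul_orbit g x hz
  have hDmem : ∀ (g : G) {w : Λ}, w ∈ orbit G y → g • w ∈ orbit G y :=
    fun g _ hw => mapsTo_smul_orbit g y hw
  letI instC : MulAction G {z : Ω // ¬ z ∈ orbit G x} :=
    { smul := fun g z => ⟨g • z.1, fun hc => z.2 (by
        have := hCmem g⁻¹ hc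
        rwa [inv_smul_smul] at this)⟩
      one_smul := fun z => Subtype.ext (one_smul _ _)
      mul_smul := fun a b z => Subtype.ext (mul_smul _ _ _) }
  letI instD : MulAction G {w : Λ // ¬ w ∈ orbit G y} :=
    { smul := fun g w => ⟨g • w.1, fun hc => w.2 (by
        have := hDmem g⁻¹ hc
        rwa [inv_smul_smul] at this)⟩
      one_smul := fun w => Subtype.ext (one_smul _ _)
      mul_smul := fun a b w => Subtype.ext (mul_smul _ _ _) }
  -- fixed point counts restrict to the complements
  have hfix' : ∀ K : Subgroup G,
      Nat.card {z : {z : Ω // ¬ z ∈ orbit G x} // ∀ h ∈ K, h • z = z} =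
        Nat.card {w : {w : Λ // ¬ w ∈ orbit G y} // ∀ h ∈ K, h • w = w} := by
    intro K
    have eC : Nat.card {z : {z : Ω // ¬ z ∈ orbit G x} // ∀ h ∈ K, h • z = z} =
        Nat.card {z : {z : Ω // ¬ z ∈ orbit G x} // ∀ h ∈ K, h • z.1 = z.1} :=
      Nat.card_congr (Equiv.subtypeEquivRight fun z =>
        ⟨fun hh h hK => congrArg Subtype.val (hh h hK),
         fun hh h hK => Subtype.ext (hh h hK)⟩)
    have eD : Nat.card {w : {w : Λ // ¬ w ∈ orbit G y} // ∀ h ∈ K, h • w = w} =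
        Nat.card {w : {w : Λ // ¬ w ∈ orbit G y} // ∀ h ∈ K, h • w.1 = w.1} :=
      Nat.card_congr (Equiv.subtypeEquivRight fun w =>
        ⟨fun hh h hK => congrArg Subtype.val (hh h hK),
         fun hh h hK => Subtype.ext (hh h hK)⟩)
    have splitΩ := card_fix_split (fun z : Ω => ∀ h ∈ K, h • z = z) (fun z => z ∈ orbit G x)
    have splitΛ := card_fix_split (fun w : Λ => ∀ h ∈ K, h • w = w) (fun w => w ∈ orbit G y)
    -- orbit fixed points correspond under φ
    have horb : Nat.card {z : {z : Ω // z ∈ orbit G x} // ∀ h ∈ K, h • z.1 = z.1} =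
        Nat.card {w : {w : Λ // w ∈ orbit G y} // ∀ h ∈ K, h • w.1 = w.1} := by
      apply Nat.card_congr
      refine Equiv.subtypeEquiv φ fun z => ?_
      constructor
      · intro hh h hK
        have : (h • z : orbit G x) = z := Subtype.ext (hh h hK)
        calc h • (φ z : Λ) = (φ (h • z) : Λ) := (hφ h z).symm
          _ = (φ z : Λ) := by rw [this]
      · intro hh h hK
        have h1 : (φ (h • z) : Λ) = (φ z : Λ) := by rw [hφ h z, hh h hK]
        have h2 : φ (h • z) = φ z := Subtype.ext h1
        exact congrArg Subtype.val (φ.injective h2)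
    have hK := hfix K
    rw [splitΩ, splitΛ] at hK
    omega
  -- induction on the complements
  have hCcard : Nat.card {z : Ω // ¬ z ∈ orbit G x} < n := by
    have hsum : Nat.card {z : Ω // z ∈ orbit G x} + Nat.card {z : Ω // ¬ z ∈ orbit G x} =
        Nat.card Ω := by
      rw [← Nat.card_sum]
      exact Nat.card_congr (Equiv.sumCompl _)
    haveI : Nonempty {z : Ω // z ∈ orbit G x} := ⟨⟨x, mem_orbit_self x⟩⟩
    have hpos : 0 < Nat.card {z : Ω // z ∈ orbit G x} := Nat.card_pos
    omega
  obtain ⟨e', he'⟩ := ih _ hCcard {z : Ω // ¬ z ∈ orbit G x} {w : Λ // ¬ w ∈ orbit G y}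
    rfl hfix'
  -- glue
  refine ⟨(Equiv.sumCompl (fun z : Ω => z ∈ orbit G x)).symm.trans
    ((φ.sumCongr e').trans (Equiv.sumCompl (fun w : Λ => w ∈ orbit G y))), ?_⟩
  intro g z
  by_cases hz : z ∈ orbit G x
  · have hgz : g • z ∈ orbit G x := hCmem g hz
    rw [Equiv.trans_apply, Equiv.trans_apply, Equiv.trans_apply, Equiv.trans_apply,
      Equiv.sumCompl_symm_apply_of_pos hz, Equiv.sumCompl_symm_apply_of_pos hgz,
      Equiv.sumCongr_apply, Equiv.sumCongr_apply, Sum.map_inl, Sum.map_inl,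
      Equiv.sumCompl_apply_inl, Equiv.sumCompl_apply_inl]
    have : (⟨g • z, hgz⟩ : orbit G x) = g • (⟨z, hz⟩ : orbit G x) := Subtype.ext rfl
    rw [this]
    exact hφ g ⟨z, hz⟩
  · have hgz : ¬ g • z ∈ orbit G x := fun hc => hz (by
      have := hCmem g⁻¹ hc
      rwa [inv_smul_smul] at this)
    rw [Equiv.trans_apply, Equiv.trans_apply, Equiv.trans_apply, Equiv.trans_apply,
      Equiv.sumCompl_symm_apply_of_neg hz, Equiv.sumCompl_symm_apply_of_neg hgz,
      Equiv.sumCongr_apply, Equiv.sumCongr_apply, Sum.map_inr, Sum.map_inr,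
      Equiv.sumCompl_apply_inr, Equiv.sumCompl_apply_inr]
    have h1 : (⟨g • z, hgz⟩ : {z : Ω // ¬ z ∈ orbit G x}) = g • ⟨z, hz⟩ := Subtype.ext rfl
    rw [h1, he' g ⟨z, hz⟩]
    rfl

/-- Two finite `G`-sets are isomorphic if and only if they have the same number of
`H`-fixed points for every subgroup `H ≤ G`. -/
theorem stmt10 {G Ω Λ : Type*} [Group G] [Finite G] [Finite Ω] [Finite Λ]
    [MulAction G Ω] [MulAction G Λ] :
    (∃ e : Ω ≃ Λ, ∀ (g : G) (x : Ω), e (g • x) = g • e x) ↔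
      ∀ H : Subgroup G,
        Nat.card {x : Ω // ∀ h ∈ H, h • x = x} = Nat.card {x : Λ // ∀ h ∈ H, h • x = x} := by
  constructor
  · rintro ⟨e, he⟩ H
    apply Nat.card_congr
    refine Equiv.subtypeEquiv e fun a => ?_
    constructor
    · intro ha h hH
      rw [← he, ha h hH]
    · intro ha h hH
      apply e.injective
      rw [he, ha h hH]
  · intro hfix
    exact burnside_marks_aux G (Nat.card Ω) Ω Λ rfl hfix
end

section
/- Let F₁, F₂ be fusion systems over finite p-groups S₁, S₂. For (S₁,S₂)-pairs (P,ψ) and (P',ψ'), the pair (P',ψ') is (F₁,F₂)-subconjugate to (P,ψ) if and only if the graph Δ(P',ψ') is (F₁ × F₂)-subconjugate to Δ(P,ψ) as subgroups of S₁ × S₂. -/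
/-- A fusion system `F` over a finite `p`-group `S`.  A morphism `P → Q` is recorded as a
homomorphism `↥P →* S` whose image is contained in `Q`. -/
structure FusionSystem (S : Type*) [Group S] where
  Hom : (P : Subgroup S) → Set (↥P →* S)
  inj : ∀ (P : Subgroup S) (φ : ↥P →* S), φ ∈ Hom P → Function.Injective φ
  conj_mem : ∀ (P : Subgroup S) (g : S), (MulAut.conj g).toMonoidHom.comp P.subtype ∈ Hom P
  comp_mem : ∀ (P Q : Subgroup S) (φ : ↥P →* S) (χ : ↥Q →* S), φ ∈ Hom P → χ ∈ Hom Q →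
    ∀ h : ∀ x, φ x ∈ Q, χ.comp (φ.codRestrict Q h) ∈ Hom P
  inv_mem : ∀ (P Q : Subgroup S) (e : ↥P ≃* ↥Q), Q.subtype.comp e.toMonoidHom ∈ Hom P →
    P.subtype.comp e.symm.toMonoidHom ∈ Hom Q

/-- The graph `Δ(P,ψ) = {(u, ψ u) : u ∈ P} ≤ S₁ × S₂` of an `(S₁,S₂)`-pair. -/
def pairGraph {S₁ S₂ : Type*} [Group S₁] [Group S₂] (P : Subgroup S₁) (ψ : ↥P →* S₂) :
    Subgroup (S₁ × S₂) :=
  (P.subtype.prod ψ).range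

/-- The morphism sets of the product fusion system `F₁ × F₂` over `S₁ × S₂`:
`Hom_{F₁×F₂}(R, -)` consists of the restrictions of products `(φ₁, φ₂)` of morphisms
`φᵢ ∈ Hom_{Fᵢ}(Pᵢ, Sᵢ)` to subgroups `R ≤ P₁ × P₂`. -/
def prodHom {S₁ S₂ : Type*} [Group S₁] [Group S₂]
    (F₁ : FusionSystem S₁) (F₂ : FusionSystem S₂) (R : Subgroup (S₁ × S₂)) :
    Set (↥R →* S₁ × S₂) :=
  {θ | ∃ (P₁ : Subgroup S₁) (P₂ : Subgroup S₂) (φ₁ : ↥P₁ →* S₁) (φ₂ : ↥P₂ →* S₂),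
    φ₁ ∈ F₁.Hom P₁ ∧ φ₂ ∈ F₂.Hom P₂ ∧
    ∃ (h₁ : ∀ x : ↥R, (x : S₁ × S₂).1 ∈ P₁) (h₂ : ∀ x : ↥R, (x : S₁ × S₂).2 ∈ P₂),
      ∀ x : ↥R, θ x = (φ₁ ⟨(x : S₁ × S₂).1, h₁ x⟩, φ₂ ⟨(x : S₁ × S₂).2, h₂ x⟩)}

/-- `(P',ψ')` is `(F₁,F₂)`-subconjugate to `(P,ψ)`: there are `φ₁ ∈ Hom_{F₁}(P',P)` and
`φ₂ ∈ Hom_{F₂}(ψ'(P'), ψ(P))` with `ψ ∘ φ₁ = φ₂ ∘ ψ'` on `P'`. -/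
def PairSubconj {S₁ S₂ : Type*} [Group S₁] [Group S₂]
    (F₁ : FusionSystem S₁) (F₂ : FusionSystem S₂)
    (P' : Subgroup S₁) (ψ' : ↥P' →* S₂) (P : Subgroup S₁) (ψ : ↥P →* S₂) : Prop :=
  ∃ φ₁ ∈ F₁.Hom P', ∃ h₁ : ∀ x, φ₁ x ∈ P,
    ∃ φ₂ ∈ F₂.Hom ψ'.range, (∀ y, φ₂ y ∈ ψ.range) ∧
      ∀ x : ↥P', φ₂ ⟨ψ' x, MonoidHom.mem_range.mpr ⟨x, rfl⟩⟩ = ψ ⟨φ₁ x, h₁ x⟩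


/-
Both sides say the same thing once the data are unpacked. A product morphism `(φ₁, φ₂)`
restricted to `Δ(P',ψ')` sends `(u, ψ' u)` to `(φ₁ u, φ₂ (ψ' u))`, and this lies in `Δ(P,ψ)`
exactly when `φ₁ u ∈ P` and `ψ (φ₁ u) = φ₂ (ψ' u)`. Conversely, the morphisms `φ₁, φ₂` of a
product morphism are defined on subgroups `P₁ ⊇ P'` and `P₂ ⊇ ψ'(P')`, and restricting them
(composition with an inclusion, which is conjugation by `1`) gives the pair of morphisms
required by `(F₁,F₂)`-subconjugacy.
-/

namespace FusionSystem

variable {S : Type*} [Group S]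

lemma exists_restrict_mem (F : FusionSystem S) {P Q : Subgroup S} {φ : ↥Q →* S}
    (hφ : φ ∈ F.Hom Q) (h : P ≤ Q) :
    ∃ χ ∈ F.Hom P, ∀ x : ↥P, χ x = φ ⟨x, h x.2⟩ := by
  set ι : ↥P →* S := (MulAut.conj (1 : S)).toMonoidHom.comp P.subtype
  have hι : ∀ x : ↥P, ι x = x := fun x => by simp [ι]
  have hιQ : ∀ x : ↥P, ι x ∈ Q := fun x => hι x ▸ h x.2
  exact ⟨φ.comp (ι.codRestrict Q hιQ), F.comp_mem P Q ι φ (F.conj_mem P 1) hφ hιQ,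
    fun x => congrArg φ (Subtype.ext (hι x))⟩

end FusionSystem

section PairGraph

variable {S₁ S₂ : Type*} [Group S₁] [Group S₂] {P : Subgroup S₁} {ψ : ↥P →* S₂}

lemma mem_pairGraph {x : S₁ × S₂} :
    x ∈ pairGraph P ψ ↔ ∃ h : x.1 ∈ P, ψ ⟨x.1, h⟩ = x.2 := by
  constructor
  · rintro ⟨u, rfl⟩
    exact ⟨u.2, rfl⟩
  · rintro ⟨h, hx⟩
    exact ⟨⟨x.1, h⟩, Prod.ext rfl hx⟩

lemma mk_mem_pairGraph (u : ↥P) : ((u : S₁), ψ u) ∈ pairGraph P ψ := ⟨u, rfl⟩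

lemma fst_mem_of_mem_pairGraph (x : ↥(pairGraph P ψ)) : (x : S₁ × S₂).1 ∈ P :=
  (mem_pairGraph.mp x.2).1

lemma snd_mem_range_of_mem_pairGraph (x : ↥(pairGraph P ψ)) : (x : S₁ × S₂).2 ∈ ψ.range := by
  obtain ⟨_, hx⟩ := mem_pairGraph.mp x.2
  exact ⟨_, hx⟩

end PairGraph

section Subconjugacy

variable {S₁ S₂ : Type*} [Group S₁] [Group S₂] {F₁ : FusionSystem S₁} {F₂ : FusionSystem S₂}
  {P : Subgroup S₁} {ψ : ↥P →* S₂} {P' : Subgroup S₁} {ψ' : ↥P' →* S₂}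

lemma PairSubconj.exists_prodHom_mapsTo_pairGraph (hsub : PairSubconj F₁ F₂ P' ψ' P ψ) :
    ∃ θ ∈ prodHom F₁ F₂ (pairGraph P' ψ'), ∀ x, θ x ∈ pairGraph P ψ := by
  obtain ⟨φ₁, hφ₁, hP, φ₂, hφ₂, -, hcomm⟩ := hsub
  set R := pairGraph P' ψ'
  set π₁ : ↥R →* S₁ := (MonoidHom.fst S₁ S₂).comp R.subtype
  set π₂ : ↥R →* S₂ := (MonoidHom.snd S₁ S₂).comp R.subtype
  refine ⟨(φ₁.comp (π₁.codRestrict P' fst_mem_of_mem_pairGraph)).prod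
      (φ₂.comp (π₂.codRestrict ψ'.range snd_mem_range_of_mem_pairGraph)),
    ⟨P', ψ'.range, φ₁, φ₂, hφ₁, hφ₂, _, _, fun x => rfl⟩, ?_⟩
  rintro ⟨_, u, rfl⟩
  exact mem_pairGraph.mpr ⟨hP u, (hcomm u).symm⟩

lemma pairSubconj_of_prodHom_mapsTo_pairGraph {θ : ↥(pairGraph P' ψ') →* S₁ × S₂}
    (hθ : θ ∈ prodHom F₁ F₂ (pairGraph P' ψ')) (hθP : ∀ x, θ x ∈ pairGraph P ψ) :
    PairSubconj F₁ F₂ P' ψ' P ψ := by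
  obtain ⟨P₁, P₂, φ₁, φ₂, hφ₁, hφ₂, h₁, h₂, hθeq⟩ := hθ
  let graphPoint (u : ↥P') : ↥(pairGraph P' ψ') := ⟨_, mk_mem_pairGraph u⟩
  obtain ⟨α, hα, hαeq⟩ := F₁.exists_restrict_mem hφ₁ fun u hu => h₁ (graphPoint ⟨u, hu⟩)
  obtain ⟨β, hβ, hβeq⟩ := F₂.exists_restrict_mem (P := ψ'.range) hφ₂ fun _ ⟨u, hu⟩ =>
    hu ▸ h₂ (graphPoint u)
  have key : ∀ u : ↥P', ∃ h : α u ∈ P, ψ ⟨α u, h⟩ = β ⟨ψ' u, u, rfl⟩ := fun u => by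
    have hu := hθP (graphPoint u)
    rw [hθeq] at hu
    rw [hαeq, hβeq]
    exact mem_pairGraph.mp hu
  refine ⟨α, hα, fun u => (key u).1, β, hβ, ?_, fun u => ((key u).2).symm⟩
  rintro ⟨_, u, rfl⟩
  exact ⟨_, (key u).2⟩

end Subconjugacy

theorem stmt14_general {S₁ S₂ : Type*} [Group S₁] [Group S₂]
    (F₁ : FusionSystem S₁) (F₂ : FusionSystem S₂)
    (P : Subgroup S₁) (ψ : ↥P →* S₂) (P' : Subgroup S₁) (ψ' : ↥P' →* S₂) :
    PairSubconj F₁ F₂ P' ψ' P ψ ↔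
      ∃ θ ∈ prodHom F₁ F₂ (pairGraph P' ψ'), ∀ x, θ x ∈ pairGraph P ψ :=
  ⟨PairSubconj.exists_prodHom_mapsTo_pairGraph,
    fun ⟨_, hθ, hθP⟩ => pairSubconj_of_prodHom_mapsTo_pairGraph hθ hθP⟩

/-- An `(S₁,S₂)`-pair `(P',ψ')` is `(F₁,F₂)`-subconjugate to `(P,ψ)` if and only if its
graph `Δ(P',ψ')` is `(F₁ × F₂)`-subconjugate to `Δ(P,ψ)` in `S₁ × S₂`. -/
theorem stmt14 (p : ℕ) (hp : p.Prime) {S₁ S₂ : Type*} [Group S₁] [Group S₂]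
    [Finite S₁] [Finite S₂] (h₁ : IsPGroup p S₁) (h₂ : IsPGroup p S₂)
    (F₁ : FusionSystem S₁) (F₂ : FusionSystem S₂)
    (P : Subgroup S₁) (ψ : ↥P →* S₂) (P' : Subgroup S₁) (ψ' : ↥P' →* S₂) :
    PairSubconj F₁ F₂ P' ψ' P ψ ↔
      ∃ θ ∈ prodHom F₁ F₂ (pairGraph P' ψ'), ∀ x, θ x ∈ pairGraph P ψ :=
  stmt14_general F₁ F₂ P ψ P' ψ'
end
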